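/- Let q be a prime, let N, X be positive real numbers with N·X ≤ q and 0 < X < q, let f be a completely multiplicative function with |f(n)| = 1 for all n, let r : ℕ → ℝ≥0 be a non-negative function not identically zero on [1, X], and set r_f(n) := f(n)r(n). With M_1 := ∑_{χ ≠ χ_0} |∑_{a ≤ X} r_f(a)χ(a)|^2 and M_2 := ∑_{χ ≠ χ_0} |∑_{n ≤ N} f(n)χ(n)|^2 |∑_{a ≤ X} r_f(a)χ(a)|^2, assume M_1 > 0. Then M_2 / M_1 ≥ (∑_{m,n ≤ N, a,b ≤ X, an = bm, q ∤ an} r(a)r(b)) / (∑_{n ≤ X} r(n)^2) − N·q/φ(q). -/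

import Mathlib

/-!
Sum over all characters first. Orthogonality gives
`∑_χ |∑ w_i χ(e_i)|² = φ(q) ∑_{e_i ≡ e_j, q ∤ e_i} w_i conj(w_j)`.
For `M₁` the points `a ≤ X < q` are distinct residues prime to `q`, so the full sum is
`φ(q) ∑ r(a)²`. For `M₂` the product of the two sums is a single character sum over the
products `a n ≤ N X ≤ q`, for which congruence forces `a n = b m`, and `|f| = 1` turns the
weights into `r(a) r(b)`. Removing the principal character can only decrease `M₁`, and
decreases `M₂` by at most `N² · X ∑ r² ≤ N q ∑ r²` (Cauchy–Schwarz).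
-/

open Finset ComplexConjugate

namespace ZMod

variable {q : ℕ} [Fact q.Prime]

lemma isUnit_natCast_and_natCast_eq_iff {a b : ℕ} (ha : a ≤ q) (hb : b ≤ q) :
    IsUnit (a : ZMod q) ∧ (a : ZMod q) = b ↔ a = b ∧ ¬ q ∣ a := by
  have hunit {c : ℕ} : IsUnit (c : ZMod q) ↔ ¬ q ∣ c := by
    rw [isUnit_iff_ne_zero, Ne, natCast_eq_zero_iff]
  have hlt {c : ℕ} (hc : c ≤ q) (hu : IsUnit (c : ZMod q)) : c < q :=
    hc.lt_of_ne fun h => hunit.1 hu (h ▸ dvd_rfl)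
  refine ⟨fun ⟨hua, hab⟩ => ?_, fun ⟨hab, hqa⟩ => ⟨hunit.2 hqa, hab ▸ rfl⟩⟩
  have hub : IsUnit (b : ZMod q) := hab ▸ hua
  rw [natCast_eq_natCast_iff', Nat.mod_eq_of_lt (hlt ha hua),
    Nat.mod_eq_of_lt (hlt hb hub)] at hab
  exact ⟨hab, hunit.1 hua⟩

end ZMod

namespace DirichletCharacter

variable {n : ℕ}

lemma norm_sum_mul_apply_sq_le (χ : DirichletCharacter ℂ n) {ι : Type*} (s : Finset ι)
    (w : ι → ℂ) (e : ι → ZMod n) :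
    ‖∑ i ∈ s, w i * χ (e i)‖ ^ 2 ≤ #s * ∑ i ∈ s, ‖w i‖ ^ 2 := by
  have hle : ‖∑ i ∈ s, w i * χ (e i)‖ ≤ ∑ i ∈ s, ‖w i‖ :=
    (norm_sum_le _ _).trans <| sum_le_sum fun i _ => by
      rw [norm_mul]
      exact mul_le_of_le_one_right (norm_nonneg _) (χ.norm_le_one _)
  calc ‖∑ i ∈ s, w i * χ (e i)‖ ^ 2 ≤ (∑ i ∈ s, ‖w i‖) ^ 2 := by gcongr
    _ ≤ #s * ∑ i ∈ s, ‖w i‖ ^ 2 := sq_sum_le_card_mul_sum_sq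

variable [NeZero n]

lemma sum_filter_ne_one_eq_sub {M : Type*} [AddCommGroup M]
    (g : DirichletCharacter ℂ n → M) :
    ∑ χ ∈ univ.filter (fun χ : DirichletCharacter ℂ n => χ ≠ 1), g χ =
      ∑ χ, g χ - g 1 := by
  rw [filter_ne', sum_erase_eq_sub (mem_univ _)]

lemma sum_apply_mul_conj_apply (u v : ZMod n) :
    ∑ χ : DirichletCharacter ℂ n, χ u * conj (χ v) =
      if IsUnit u ∧ u = v then (n.totient : ℂ) else 0 := by
  by_cases hv : IsUnit v
  · obtain ⟨w, rfl⟩ := hv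
    have hconj (χ : DirichletCharacter ℂ n) : χ u * conj (χ w) = χ (u * ↑w⁻¹) := by
      rw [map_mul, ← Ring.inverse_unit, ← MulChar.inv_apply, ← MulChar.star_apply']
      rfl
    simp_rw [hconj, sum_characters_eq, Units.mul_inv_eq_one]
    by_cases h : u = w <;> simp [h]
  · rw [if_neg fun ⟨hu, huv⟩ => hv (huv ▸ hu)]
    simp [MulChar.map_nonunit _ hv]

lemma ofReal_sum_norm_sq_sum {ι : Type*} (s : Finset ι) (w : ι → ℂ) (e : ι → ZMod n) :
    ((∑ χ : DirichletCharacter ℂ n, ‖∑ i ∈ s, w i * χ (e i)‖ ^ 2 : ℝ) : ℂ) =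
      n.totient * ∑ i ∈ s, ∑ j ∈ s,
        if IsUnit (e i) ∧ e i = e j then w i * conj (w j) else 0 := by
  push_cast
  calc ∑ χ : DirichletCharacter ℂ n, (‖∑ i ∈ s, w i * χ (e i)‖ : ℂ) ^ 2
      = ∑ χ : DirichletCharacter ℂ n, ∑ i ∈ s, ∑ j ∈ s,
          w i * conj (w j) * (χ (e i) * conj (χ (e j))) := by
        refine sum_congr rfl fun χ _ => ?_
        rw [← Complex.mul_conj', map_sum, sum_mul_sum]
        exact sum_congr rfl fun i _ => sum_congr rfl fun j _ => by rw [map_mul]; ring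
    _ = ∑ i ∈ s, ∑ j ∈ s, w i * conj (w j) *
          ∑ χ : DirichletCharacter ℂ n, χ (e i) * conj (χ (e j)) := by
        simp only [mul_sum]
        rw [sum_comm]
        exact sum_congr rfl fun i _ => sum_comm
    _ = _ := by
        simp only [sum_apply_mul_conj_apply, mul_sum, mul_ite, mul_zero]
        exact sum_congr rfl fun i _ => sum_congr rfl fun j _ => by rw [mul_comm]

variable {q : ℕ} [Fact q.Prime]

lemma sum_norm_sq_sum_natCast {ι : Type*} (s : Finset ι) (w : ι → ℂ) (e : ι → ℕ)
    (K : ι → ι → ℝ) (he : ∀ i ∈ s, e i ≤ q)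
    (hK : ∀ i ∈ s, ∀ j ∈ s, e i = e j → ¬ q ∣ e i → w i * conj (w j) = K i j) :
    ∑ χ : DirichletCharacter ℂ q, ‖∑ i ∈ s, w i * χ (e i)‖ ^ 2 =
      q.totient * ∑ i ∈ s, ∑ j ∈ s, if e i = e j ∧ ¬ q ∣ e i then K i j else 0 := by
  apply Complex.ofReal_injective
  rw [ofReal_sum_norm_sq_sum s w (fun i => (e i : ZMod q))]
  push_cast
  congr 1
  refine sum_congr rfl fun i hi => sum_congr rfl fun j hj => ?_
  simp only [ZMod.isUnit_natCast_and_natCast_eq_iff (he i hi) (he j hj)]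
  split_ifs with h
  exacts [hK i hi j hj h.1 h.2, Complex.ofReal_zero.symm]

lemma sum_norm_sq_sum_of_lt (s : Finset ℕ) (w : ℕ → ℂ) (hs : ∀ a ∈ s, 0 < a ∧ a < q) :
    ∑ χ : DirichletCharacter ℂ q, ‖∑ a ∈ s, w a * χ a‖ ^ 2 =
      q.totient * ∑ a ∈ s, ‖w a‖ ^ 2 := by
  rw [sum_norm_sq_sum_natCast s w (fun a => a) (fun a _ => ‖w a‖ ^ 2)
    (fun a ha => (hs a ha).2.le)
    (fun a _ b _ hab _ => by rw [← hab, Complex.mul_conj']; push_cast; rfl)]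
  congr 1
  refine sum_congr rfl fun a ha => ?_
  simp [ha, Nat.not_dvd_of_pos_of_lt (hs a ha).1 (hs a ha).2]

lemma sum_norm_sq_mul_norm_sq_eq {f : ℕ → ℂ} (hf : ∀ m n, f (m * n) = f m * f n)
    (hf1 : ∀ n, 0 < n → ‖f n‖ = 1) (r : ℕ → ℝ) (U T : Finset ℕ)
    (hUT : ∀ n ∈ U, ∀ a ∈ T, a * n ≤ q) :
    ∑ χ : DirichletCharacter ℂ q,
        ‖∑ n ∈ U, f n * χ n‖ ^ 2 * ‖∑ a ∈ T, f a * r a * χ a‖ ^ 2 =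
      q.totient * ∑ m ∈ U, ∑ n ∈ U, ∑ a ∈ T, ∑ b ∈ T,
        if a * n = b * m ∧ ¬ q ∣ a * n then r a * r b else 0 := by
  have hprod (χ : DirichletCharacter ℂ q) :
      ‖∑ n ∈ U, f n * χ n‖ ^ 2 * ‖∑ a ∈ T, f a * r a * χ a‖ ^ 2 =
        ‖∑ p ∈ U ×ˢ T, f (p.2 * p.1) * r p.2 * χ ↑(p.2 * p.1)‖ ^ 2 := by
    rw [← mul_pow, ← norm_mul, sum_mul_sum, sum_product]
    congr 2
    refine sum_congr rfl fun n _ => sum_congr rfl fun a _ => ?_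
    rw [hf, Nat.cast_mul, map_mul]
    ring
  have hK : ∀ p ∈ U ×ˢ T, ∀ p' ∈ U ×ˢ T,
      p.2 * p.1 = p'.2 * p'.1 → ¬ q ∣ p.2 * p.1 →
      f (p.2 * p.1) * r p.2 * conj (f (p'.2 * p'.1) * r p'.2) = ((r p.2 * r p'.2 : ℝ) : ℂ) := by
    intro p _ p' _ heq hq
    have hpos : 0 < p.2 * p.1 := Nat.pos_of_ne_zero fun h => hq (h ▸ dvd_zero q)
    rw [← heq, map_mul, Complex.conj_ofReal, mul_mul_mul_comm, Complex.mul_conj', hf1 _ hpos]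
    push_cast
    ring
  simp only [hprod]
  rw [sum_norm_sq_sum_natCast _ _ (fun p => p.2 * p.1) (fun p p' => r p.2 * r p'.2)
    (fun p hp => hUT _ (mem_product.1 hp).1 _ (mem_product.1 hp).2) hK]
  simp only [sum_product]
  exact congrArg _ ((sum_congr rfl fun n _ => sum_comm).trans sum_comm)

end DirichletCharacter

section Unimodular

variable {f : ℕ → ℂ}

lemma sum_Icc_norm_mul_ofReal_sq (hf1 : ∀ n, 0 < n → ‖f n‖ = 1) (r : ℕ → ℝ)
    (L : ℕ) :
    ∑ a ∈ Icc 1 L, ‖f a * r a‖ ^ 2 = ∑ a ∈ Icc 1 L, r a ^ 2 :=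
  sum_congr rfl fun a ha => by
    rw [norm_mul, hf1 a (mem_Icc.1 ha).1, one_mul, Complex.norm_real, Real.norm_eq_abs, sq_abs]

lemma norm_sq_sum_Icc_mul_apply_le (hf1 : ∀ n, 0 < n → ‖f n‖ = 1) {n : ℕ}
    (χ : DirichletCharacter ℂ n) (L : ℕ) :
    ‖∑ k ∈ Icc 1 L, f k * χ k‖ ^ 2 ≤ L ^ 2 := by
  have hcard := χ.norm_sum_mul_apply_sq_le (Icc 1 L) f (fun k => k)
  have hsum : ∑ k ∈ Icc 1 L, ‖f k‖ ^ 2 = L := calc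
    _ = ∑ k ∈ Icc 1 L, (1 : ℝ) :=
      sum_congr rfl fun k hk => by rw [hf1 k (mem_Icc.1 hk).1, one_pow]
    _ = L := by simp
  rwa [hsum, Nat.card_Icc, Nat.add_sub_cancel, ← sq] at hcard

lemma norm_sq_sum_Icc_mul_ofReal_mul_apply_le (hf1 : ∀ n, 0 < n → ‖f n‖ = 1) {n : ℕ}
    (χ : DirichletCharacter ℂ n) (r : ℕ → ℝ) (L : ℕ) :
    ‖∑ a ∈ Icc 1 L, f a * r a * χ a‖ ^ 2 ≤ L * ∑ a ∈ Icc 1 L, r a ^ 2 := by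
  have hcard := χ.norm_sum_mul_apply_sq_le (Icc 1 L) (fun a => f a * r a) (fun a => a)
  rwa [sum_Icc_norm_mul_ofReal_sq hf1, Nat.card_Icc, Nat.add_sub_cancel] at hcard

end Unimodular

lemma floor_mul_floor_le_of_mul_le {x y : ℝ} {q : ℕ} (hx : 0 ≤ x) (hy : 0 ≤ y)
    (h : x * y ≤ q) : ⌊x⌋₊ * ⌊y⌋₊ ≤ q := by
  have : (⌊x⌋₊ * ⌊y⌋₊ : ℝ) ≤ q := calc
    _ ≤ x * y := by gcongr <;> exact Nat.floor_le ‹_›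
    _ ≤ q := h
  exact_mod_cast this

lemma div_sub_div_le_div_of_le {φ S Q c M₁ M₂ : ℝ} (hφ : 0 < φ) (hM₁ : 0 < M₁)
    (hM₁S : M₁ ≤ φ * S) (hM₂Q : φ * Q - c * S ≤ M₂) (hM₂ : 0 ≤ M₂) :
    Q / S - c / φ ≤ M₂ / M₁ := by
  have hS : 0 < S := pos_of_mul_pos_right (hM₁.trans_le hM₁S) hφ.le
  rw [show Q / S - c / φ = (φ * Q - c * S) / (φ * S) by field_simp]
  exact div_le_div₀ hM₂ hM₂Q hM₁ hM₁S

theorem stmt_6_general (q : ℕ) [Fact q.Prime] (N X : ℝ) (hN : 0 < N) (hX : 0 < X)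
    (hNX : N * X ≤ q) (hXq : X < q)
    (f : ℕ → ℂ) (hf : ∀ m n : ℕ, f (m * n) = f m * f n)
    (hf1 : ∀ n : ℕ, 0 < n → ‖f n‖ = 1)
    (r : ℕ → ℝ)
    (rf : ℕ → ℂ) (hrf : ∀ n : ℕ, rf n = f n * (r n : ℂ))
    (M₁ M₂ : ℝ)
    (hM₁ : M₁ = ∑ χ ∈ Finset.univ.filter (fun χ : DirichletCharacter ℂ q => χ ≠ 1),
      ‖∑ a ∈ Finset.Icc 1 ⌊X⌋₊, rf a * χ (a : ZMod q)‖ ^ 2)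
    (hM₂ : M₂ = ∑ χ ∈ Finset.univ.filter (fun χ : DirichletCharacter ℂ q => χ ≠ 1),
      ‖∑ n ∈ Finset.Icc 1 ⌊N⌋₊, f n * χ (n : ZMod q)‖ ^ 2 *
        ‖∑ a ∈ Finset.Icc 1 ⌊X⌋₊, rf a * χ (a : ZMod q)‖ ^ 2)
    (hM₁pos : 0 < M₁) :
    M₂ / M₁ ≥
      (∑ m ∈ Finset.Icc 1 ⌊N⌋₊, ∑ n ∈ Finset.Icc 1 ⌊N⌋₊,
          ∑ a ∈ Finset.Icc 1 ⌊X⌋₊, ∑ b ∈ Finset.Icc 1 ⌊X⌋₊,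
            if a * n = b * m ∧ ¬ (q ∣ a * n) then r a * r b else 0) /
        (∑ n ∈ Finset.Icc 1 ⌊X⌋₊, (r n) ^ 2) -
      N * (q : ℝ) / (Nat.totient q : ℝ) := by
  simp only [hrf] at hM₁ hM₂
  set S := ∑ n ∈ Icc 1 ⌊X⌋₊, r n ^ 2
  have hφ : (0 : ℝ) < q.totient := by exact_mod_cast Nat.totient_pos.2 (Fact.out : q.Prime).pos
  have hT (a : ℕ) (ha : a ∈ Icc 1 ⌊X⌋₊) : 0 < a ∧ a < q :=
    ⟨(mem_Icc.1 ha).1, (mem_Icc.1 ha).2.trans_lt ((Nat.floor_lt hX.le).2 hXq)⟩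
  have hUT (n : ℕ) (hn : n ∈ Icc 1 ⌊N⌋₊) (a : ℕ) (ha : a ∈ Icc 1 ⌊X⌋₊) :
      a * n ≤ q :=
    (Nat.mul_le_mul (mem_Icc.1 ha).2 (mem_Icc.1 hn).2).trans
      (floor_mul_floor_le_of_mul_le hX.le hN.le (by linarith))
  have hM₁S : M₁ ≤ q.totient * S := by
    rw [hM₁, DirichletCharacter.sum_filter_ne_one_eq_sub,
      DirichletCharacter.sum_norm_sq_sum_of_lt _ _ hT, sum_Icc_norm_mul_ofReal_sq hf1]
    exact sub_le_self _ (sq_nonneg _)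
  have hχ (χ : DirichletCharacter ℂ q) : ‖∑ n ∈ Icc 1 ⌊N⌋₊, f n * χ n‖ ^ 2 *
      ‖∑ a ∈ Icc 1 ⌊X⌋₊, f a * r a * χ a‖ ^ 2 ≤ N * q * S := calc
    _ ≤ (⌊N⌋₊ : ℝ) ^ 2 * (⌊X⌋₊ * S) :=
      mul_le_mul (norm_sq_sum_Icc_mul_apply_le hf1 χ _)
        (norm_sq_sum_Icc_mul_ofReal_mul_apply_le hf1 χ r _) (by positivity) (by positivity)
    _ ≤ N ^ 2 * (X * S) := by
      have : 0 ≤ S := sum_nonneg fun _ _ => sq_nonneg _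
      gcongr ?_ ^ 2 * (?_ * S)
      exacts [Nat.floor_le hN.le, Nat.floor_le hX.le]
    _ = N * (N * X) * S := by ring
    _ ≤ N * q * S := by gcongr
  refine div_sub_div_le_div_of_le hφ hM₁pos hM₁S ?_
    (hM₂ ▸ sum_nonneg fun χ _ => by positivity)
  rw [hM₂, DirichletCharacter.sum_filter_ne_one_eq_sub,
    DirichletCharacter.sum_norm_sq_mul_norm_sq_eq hf hf1 _ _ _ hUT]
  linarith [hχ 1]

/-- **Lower bound for the ratio `M₂/M₁`.** For a prime `q`, positive reals
`N, X` with `N·X ≤ q` and `X < q`, a completely multiplicative `f` of modulus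
`1`, a non-negative `r : ℕ → ℝ` not identically zero on `[1, X]`, and
`r_f(n) = f(n)r(n)`, with `M₁ = ∑_{χ ≠ χ₀} |∑_{a ≤ X} r_f(a)χ(a)|²` and
`M₂ = ∑_{χ ≠ χ₀} |∑_{n ≤ N} f(n)χ(n)|² |∑_{a ≤ X} r_f(a)χ(a)|²`, if `M₁ > 0`
then `M₂/M₁ ≥ (∑_{m,n ≤ N, a,b ≤ X, an = bm, q ∤ an} r(a)r(b)) / (∑_{n ≤ X} r(n)²)
  − N·q/φ(q)`. -/
theorem stmt_6 (q : ℕ) [Fact q.Prime] (N X : ℝ) (hN : 0 < N) (hX : 0 < X)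
    (hNX : N * X ≤ q) (hXq : X < q)
    (f : ℕ → ℂ) (hf : ∀ m n : ℕ, f (m * n) = f m * f n)
    (hf1 : ∀ n : ℕ, 0 < n → ‖f n‖ = 1)
    (r : ℕ → ℝ) (hr : ∀ n : ℕ, 0 ≤ r n)
    (hr0 : ∃ n ∈ Finset.Icc 1 ⌊X⌋₊, r n ≠ 0)
    (rf : ℕ → ℂ) (hrf : ∀ n : ℕ, rf n = f n * (r n : ℂ))
    (M₁ M₂ : ℝ)
    (hM₁ : M₁ = ∑ χ ∈ Finset.univ.filter (fun χ : DirichletCharacter ℂ q => χ ≠ 1),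
      ‖∑ a ∈ Finset.Icc 1 ⌊X⌋₊, rf a * χ (a : ZMod q)‖ ^ 2)
    (hM₂ : M₂ = ∑ χ ∈ Finset.univ.filter (fun χ : DirichletCharacter ℂ q => χ ≠ 1),
      ‖∑ n ∈ Finset.Icc 1 ⌊N⌋₊, f n * χ (n : ZMod q)‖ ^ 2 *
        ‖∑ a ∈ Finset.Icc 1 ⌊X⌋₊, rf a * χ (a : ZMod q)‖ ^ 2)
    (hM₁pos : 0 < M₁) :
    M₂ / M₁ ≥
      (∑ m ∈ Finset.Icc 1 ⌊N⌋₊, ∑ n ∈ Finset.Icc 1 ⌊N⌋₊,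
          ∑ a ∈ Finset.Icc 1 ⌊X⌋₊, ∑ b ∈ Finset.Icc 1 ⌊X⌋₊,
            if a * n = b * m ∧ ¬ (q ∣ a * n) then r a * r b else 0) /
        (∑ n ∈ Finset.Icc 1 ⌊X⌋₊, (r n) ^ 2) -
      N * (q : ℝ) / (Nat.totient q : ℝ) :=
  stmt_6_general q N X hN hX hNX hXq f hf hf1 r rf hrf M₁ M₂ hM₁ hM₂ hM₁pos
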